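/- Let F be a field with a valuation v, and let K ⊆ K' and K ⊆ L be subfields of F. Assume that the extension L/K is vs-defectless, that Γ(L) ∩ Γ(K') = Γ(K), and that the residue field k(L) is linearly disjoint from k(K') over k(K) inside the residue field of F. Let LK' denote the subfield of F generated by L ∪ K'. Then k(LK') is the field compositum of k(L) and k(K') inside the residue field of F, i.e., res(O_{LK'}) is the subfield of k_F generated by k(L) ∪ k(K'). -/

import Mathlib

open scoped Pointwise

/-- Linear independence of a finite family over a subset `E` of a commutative ring: no
nontrivial linear combination with coefficients in `E` vanishes. -/
def LinIndepOver {R : Type*} [CommRing R] (E : Set R) {n : ℕ} (b : Fin n → R) : Prop :=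
  ∀ c : Fin n → R, (∀ i, c i ∈ E) → (∑ i, c i * b i) = 0 → ∀ i, c i = 0

variable {F Γ₀ : Type*} [Field F] [LinearOrderedCommGroupWithZero Γ₀]

/-- A finite family `b` of elements of `F` is `E`-valuation independent:
`v(∑ cᵢ bᵢ) = minᵢ v(cᵢ bᵢ)` for all coefficients `cᵢ ∈ E`.  (In Mathlib's multiplicative
convention for valuations, the additive `min` becomes the multiplicative `sup`, and the additive
`∞` becomes `0`.) -/
def ValIndep (v : Valuation F Γ₀) (E : Set F) {n : ℕ} (b : Fin n → F) : Prop :=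
  letI : OrderBot Γ₀ := { bot := 0, bot_le := fun _ => zero_le' }
  ∀ c : Fin n → F, (∀ i, c i ∈ E) →
    v (∑ i, c i * b i) = Finset.univ.sup fun i => v (c i * b i)

/-- The `E`-linear span (inside `F`) of a subset `s ⊆ F`, for `E ⊆ F`. -/
def SpanOver (E s : Set F) : Set F :=
  {y | ∃ (n : ℕ) (c t : Fin n → F),
    (∀ i, c i ∈ E) ∧ (∀ i, t i ∈ s) ∧ y = ∑ i, c i * t i}

/-- The extension `L/E` is vs-defectless: every finite-dimensional `E`-vector subspace of `L`
admits an `E`-basis which is `E`-valuation independent. -/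
def VsDefectless (v : Valuation F Γ₀) (E L : Set F) : Prop :=
  ∀ (n : ℕ) (x : Fin n → F), (∀ i, x i ∈ L) →
    ∃ (m : ℕ) (b : Fin m → F),
      ValIndep v E b ∧ LinIndepOver E b ∧
        SpanOver E (Set.range b) = SpanOver E (Set.range x)

/-- The value group `Γ(E) = v(E∖{0})` of a subset `E ⊆ F`, as a subset of `Γ₀`. -/
def ValueGroupSet (v : Valuation F Γ₀) (E : Set F) : Set Γ₀ :=
  v '' (E \ {0})

/-- The residue field `k_F = O_F/m_F` of the valued field `(F, v)`. -/
abbrev ResField (v : Valuation F Γ₀) : Type _ :=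
  IsLocalRing.ResidueField v.valuationSubring

/-- The image `k(E) = res(O_E)` of a subset `E ⊆ F` in the residue field of `(F, v)`. -/
def ResidueSet (v : Valuation F Γ₀) (E : Set F) : Set (ResField v) :=
  {y | ∃ x : v.valuationSubring, (x : F) ∈ E ∧ IsLocalRing.residue _ x = y}

/-! Write an element of `LK'` as `f / g` with `f, g` in the `K'`-span of `L`. By
vs-defectlessness, `f` and `g` lie in the `K'`-span of one `K`-valuation-independent family `b`
in `L`. This family stays valuation independent over `K'`: the terms of maximal value, normalised
by elements of `K` (available because `Γ(L) ∩ Γ(K') = Γ(K)`), become units of `L` whose residues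
are linearly independent over `k(K)`, hence over `k(K')`, so their sum cannot cancel. Dividing
`f` and `g` by the dominant term of `g` then exhibits the residue of `f / g` as a quotient of sums
of residues of products `w * u`, with `w` a unit of `K'` and `u` a unit of `L`. -/

namespace Valuation

variable (v : Valuation F Γ₀)

theorem residue_eq_zero_iff (x : v.valuationSubring) :
    IsLocalRing.residue _ x = 0 ↔ v x < 1 := by
  rw [IsLocalRing.residue_eq_zero_iff, mem_maximalIdeal_iff]

theorem residue_ne_zero_iff (x : v.valuationSubring) :
    IsLocalRing.residue _ x ≠ 0 ↔ v x = 1 := by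
  rw [Ne, residue_eq_zero_iff, not_lt]
  exact ⟨x.2.antisymm, ge_of_eq⟩

end Valuation

open Valuation

section Residue

variable {v : Valuation F Γ₀}

theorem residueSet_mono {E E' : Set F} (h : E ⊆ E') : ResidueSet v E ⊆ ResidueSet v E' :=
  fun _ ⟨x, hx, hy⟩ => ⟨x, h hx, hy⟩

variable (v) in
def residueSubfield (E : Subfield F) : Subfield (ResField v) where
  carrier := ResidueSet v E
  zero_mem' := ⟨0, E.zero_mem, map_zero _⟩
  one_mem' := ⟨1, E.one_mem, map_one _⟩
  add_mem' := by
    rintro _ _ ⟨x, hx, rfl⟩ ⟨y, hy, rfl⟩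
    exact ⟨x + y, E.add_mem hx hy, map_add _ _ _⟩
  mul_mem' := by
    rintro _ _ ⟨x, hx, rfl⟩ ⟨y, hy, rfl⟩
    exact ⟨x * y, E.mul_mem hx hy, map_mul _ _ _⟩
  neg_mem' := by
    rintro _ ⟨x, hx, rfl⟩
    exact ⟨-x, E.neg_mem hx, map_neg _ _⟩
  inv_mem' := by
    rintro _ ⟨x, hx, rfl⟩
    rcases eq_or_ne (IsLocalRing.residue _ x) 0 with h0 | h0
    · rw [h0, inv_zero]
      exact ⟨0, E.zero_mem, map_zero _⟩
    have hv : v x = 1 := (residue_ne_zero_iff v x).1 h0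
    have hx0 : (x : F) ≠ 0 := fun h => by simp [h] at hv
    refine ⟨⟨(x : F)⁻¹, (v.mem_valuationSubring_iff _).2 (by rw [map_inv₀, hv, inv_one])⟩,
      E.inv_mem hx, eq_inv_of_mul_eq_one_right ?_⟩
    rw [← map_mul, ← map_one (IsLocalRing.residue _)]
    exact congrArg _ (Subtype.ext (mul_inv_cancel₀ hx0))

end Residue

section ValuationIndependence

variable {v : Valuation F Γ₀}

theorem valIndep_iff {E : Set F} {n : ℕ} {b : Fin n → F} :
    ValIndep v E b ↔
      ∀ c : Fin n → F, (∀ i, c i ∈ E) → ∀ i, v (c i * b i) ≤ v (∑ j, c j * b j) := by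
  let _ : OrderBot Γ₀ := { bot := 0, bot_le := fun _ => zero_le }
  refine forall₂_congr fun c _ => ⟨fun h i => ?_, fun h => ?_⟩
  · exact h ▸ Finset.le_sup (f := fun i => v (c i * b i)) (Finset.mem_univ i)
  · exact (v.map_sum_le fun i _ => Finset.le_sup (f := fun i => v (c i * b i))
      (Finset.mem_univ i)).antisymm (Finset.sup_le fun i _ => h i)

namespace ValIndep

theorem mul_left {E : Subfield F} {n : ℕ} {b : Fin n → F} (hb : ValIndep v E b) (β : F)
    {r : Fin n → F} (hr : ∀ k, r k ∈ E) : ValIndep v E fun k => β * (r k * b k) := by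
  rw [valIndep_iff] at hb ⊢
  intro c hc i
  have key := hb (fun k => c k * r k) (fun k => mul_mem (hc k) (hr k)) i
  calc v (c i * (β * (r i * b i))) = v β * v (c i * r i * b i) := by
        rw [← map_mul]; ring_nf
    _ ≤ v β * v (∑ j, c j * r j * b j) := mul_le_mul_right key _
    _ = v (∑ j, c j * (β * (r j * b j))) := by
        rw [← map_mul, Finset.mul_sum]; ring_nf

theorem comp_injective {E : Set F} (h0 : 0 ∈ E) {n s : ℕ} {b : Fin n → F} (hb : ValIndep v E b)
    {σ : Fin s → Fin n} (hσ : σ.Injective) : ValIndep v E (b ∘ σ) := by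
  rw [valIndep_iff] at hb ⊢
  intro c hc k
  have hext : ∀ i, Function.extend σ c 0 i ∈ E := by
    intro i
    by_cases hi : ∃ k, σ k = i
    · obtain ⟨k, rfl⟩ := hi
      rw [hσ.extend_apply]
      exact hc k
    · rw [Function.extend_apply' _ _ _ hi]
      exact h0
  have hsum : ∑ j, c j * (b ∘ σ) j = ∑ i, Function.extend σ c 0 i * b i :=
    Fintype.sum_of_injective σ hσ _ _
      (fun i hi => by rw [Function.extend_apply' _ _ _ hi, Pi.zero_apply, zero_mul])
      (fun j => by rw [hσ.extend_apply]; rfl)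
  rw [hsum, Function.comp_apply]
  simpa only [hσ.extend_apply] using hb _ hext (σ k)

end ValIndep

theorem linIndepOver_residue {E : Set F} {s : ℕ} {u : Fin s → v.valuationSubring}
    (hu : ∀ k, v (u k) = 1) (hind : ValIndep v E fun k => (u k : F)) :
    LinIndepOver (ResidueSet v E) fun k => IsLocalRing.residue _ (u k) := by
  intro δ hδ hsum k
  choose D hDE hDres using hδ
  have hsmall : v (∑ j, (D j : F) * u j) < 1 := by
    have hres : IsLocalRing.residue _ (∑ j, D j * u j) = 0 := by
      simpa only [map_sum, map_mul, hDres] using hsum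
    simpa using (residue_eq_zero_iff v _).1 hres
  rw [← hDres k, residue_eq_zero_iff]
  calc v (D k) = v ((D k : F) * u k) := by rw [map_mul, hu, mul_one]
    _ ≤ v (∑ j, (D j : F) * u j) := valIndep_iff.1 hind (fun j => D j) hDE k
    _ < 1 := hsmall

end ValuationIndependence

section Span

open Submodule

theorem spanOver_eq_span (E : Subfield F) (s : Set F) : SpanOver (E : Set F) s = span E s := by
  ext y
  rw [SetLike.mem_coe, mem_span_set']
  constructor
  · rintro ⟨n, c, t, hc, ht, rfl⟩
    exact ⟨n, fun i => ⟨c i, hc i⟩, fun i => ⟨t i, ht i⟩, rfl⟩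
  · rintro ⟨n, c, t, rfl⟩
    exact ⟨n, fun i => c i, fun i => t i, fun i => (c i).2, fun i => (t i).2, rfl⟩

theorem spanOver_mono {E E' : Set F} (h : E ⊆ E') (s : Set F) : SpanOver E s ⊆ SpanOver E' s :=
  fun _ ⟨n, c, t, hc, ht, hy⟩ => ⟨n, c, t, fun i => h (hc i), ht, hy⟩

theorem spanOver_subset {E s : Set F} {L : Subfield F} (hE : E ⊆ L) (hs : s ⊆ L) :
    SpanOver E s ⊆ L := by
  rintro _ ⟨n, c, t, hc, ht, rfl⟩
  exact sum_mem fun i _ => mul_mem (hE (hc i)) (hs (ht i))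

theorem exists_mul_eq_of_mem_sup {K' L : Subfield F} {x : F} (hx : x ∈ L ⊔ K') :
    ∃ f ∈ span K' (L : Set F), ∃ g ∈ span K' (L : Set F), g ≠ 0 ∧ x * g = f := by
  have hadj : Subring.closure ((L : Set F) ∪ K') ≤ (Algebra.adjoin K' (L : Set F)).toSubring :=
    Subring.closure_le.2 (Set.union_subset Algebra.subset_adjoin
      fun z hz => Subalgebra.algebraMap_mem _ (⟨z, hz⟩ : K'))
  have hring : ∀ y ∈ Subring.closure ((L : Set F) ∪ K'), y ∈ span K' (L : Set F) := by
    intro y hy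
    have := hadj hy
    rwa [Subalgebra.mem_toSubring, ← Subalgebra.mem_toSubmodule, Algebra.adjoin_eq_span,
      show Submonoid.closure (L : Set F) = L.toSubmonoid from Submonoid.closure_eq _] at this
  rw [← L.closure_eq, ← K'.closure_eq, ← Subfield.closure_union, Subfield.mem_closure_iff] at hx
  obtain ⟨y, hy, z, hz, rfl⟩ := hx
  rcases eq_or_ne z 0 with rfl | hz0
  · exact ⟨0, zero_mem _, 1, subset_span L.one_mem, one_ne_zero, by simp⟩
  · exact ⟨y, hring y hy, z, hring z hz, hz0, div_mul_cancel₀ y hz0⟩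

theorem VsDefectless.exists_valIndep_of_mem_span {v : Valuation F Γ₀} {K K' L : Subfield F}
    (hdef : VsDefectless v K L) (hKK' : K ≤ K') (hKL : K ≤ L) {f g : F}
    (hf : f ∈ span K' (L : Set F)) (hg : g ∈ span K' (L : Set F)) :
    ∃ (p : ℕ) (b : Fin p → F), (∀ k, b k ∈ L) ∧ ValIndep v K b ∧
      f ∈ span K' (Set.range b) ∧ g ∈ span K' (Set.range b) := by
  classical
  obtain ⟨T, hTL, hfT⟩ := mem_span_finite_of_mem_span hf
  obtain ⟨T', hT'L, hgT'⟩ := mem_span_finite_of_mem_span hg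
  obtain ⟨n, x, hx⟩ := (T ∪ T').finite_toSet.fin_embedding
  have hxL : Set.range x ⊆ L := by
    rw [hx, Finset.coe_union]; exact Set.union_subset hTL hT'L
  obtain ⟨p, b, hb, -, hspan⟩ := hdef n x fun i => hxL ⟨i, rfl⟩
  have hsub : ∀ {E : Subfield F} (s : Set F), s ⊆ SpanOver (E : Set F) s := fun s => by
    rw [spanOver_eq_span]; exact subset_span
  have hbL : ∀ k, b k ∈ L := fun k =>
    spanOver_subset hKL hxL (hspan ▸ hsub (Set.range b) ⟨k, rfl⟩)
  have hle : span K' (T ∪ T' : Finset F) ≤ span K' (Set.range b) := by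
    rw [span_le, ← hx, ← spanOver_eq_span]
    exact (hsub _).trans (hspan ▸ spanOver_mono hKK' _)
  refine ⟨p, b, hbL, hb, hle (span_mono ?_ hfT), hle (span_mono ?_ hgT')⟩ <;> simp

end Span

def ResidueLinDisjoint (v : Valuation F Γ₀) (K K' L : Set F) : Prop :=
  ∀ (n : ℕ) (x : Fin n → ResField v), (∀ i, x i ∈ ResidueSet v L) →
    LinIndepOver (ResidueSet v K) x → LinIndepOver (ResidueSet v K') x

section Disjoint

variable {v : Valuation F Γ₀} {K K' L : Subfield F}

theorem ValIndep.of_residueLinDisjoint_of_val_eq_one (hres : ResidueLinDisjoint v K K' L)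
    {s : ℕ} {u : Fin s → v.valuationSubring} (hu : ∀ k, v (u k) = 1) (huL : ∀ k, (u k : F) ∈ L)
    (hind : ValIndep v K fun k => (u k : F)) : ValIndep v K' fun k => (u k : F) := by
  rw [valIndep_iff]
  intro c hc i
  have : Nonempty (Fin s) := ⟨i⟩
  obtain ⟨k₀, hk₀⟩ := Finite.exists_max fun k => v (c k)
  have hcu : ∀ k, v (c k * u k) = v (c k) := fun k => by rw [map_mul, hu, mul_one]
  rcases eq_or_ne (c k₀) 0 with h0 | h0
  · have hci : v (c i) = 0 := le_antisymm (by simpa [h0] using hk₀ i) zero_le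
    rw [hcu, hci]
    exact zero_le
  let W : Fin s → v.valuationSubring := fun k =>
    ⟨c k / c k₀, (v.mem_valuationSubring_iff _).2 (by
      rw [map_div₀]; exact div_le_one_of_le₀ (hk₀ k) zero_le)⟩
  have hW₀ : W k₀ = 1 := Subtype.ext (div_self h0)
  have hlin := hres s _ (fun k => ⟨u k, huL k, rfl⟩) (linIndepOver_residue hu hind)
  have hne : IsLocalRing.residue _ (∑ k, W k * u k) ≠ 0 := by
    rw [map_sum]
    simp_rw [map_mul]
    intro hz
    have := hlin _ (fun k => ⟨W k, div_mem (hc k) (hc k₀), rfl⟩) hz k₀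
    rw [hW₀, map_one] at this
    exact one_ne_zero this
  have h1 : v (∑ k, c k / c k₀ * u k) = 1 := by
    simpa [W] using (residue_ne_zero_iff v _).1 hne
  calc v (c i * u i) = v (c i) := hcu i
    _ ≤ v (c k₀) := hk₀ i
    _ = v (c k₀ * ∑ k, c k / c k₀ * u k) := by rw [map_mul, h1, mul_one]
    _ = v (∑ k, c k * u k) := by
      rw [Finset.mul_sum]
      congr 1
      exact Finset.sum_congr rfl fun k _ => by field_simp

theorem exists_mem_val_mul_eq
    (hΓ : ValueGroupSet v L ∩ ValueGroupSet v K' = ValueGroupSet v K)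
    {a c t d : F} (ha : a ∈ K') (hc : c ∈ K') (ht : t ∈ L) (hd : d ∈ L)
    (hat : a * t ≠ 0) (hcd : c * d ≠ 0) (h : v (a * t) = v (c * d)) :
    ∃ e ∈ K, e ≠ 0 ∧ v (e * d) = v t := by
  obtain ⟨ha0, ht0⟩ := mul_ne_zero_iff.1 hat
  obtain ⟨hc0, hd0⟩ := mul_ne_zero_iff.1 hcd
  have hL : v (t / d) ∈ ValueGroupSet v L := ⟨t / d, ⟨div_mem ht hd, div_ne_zero ht0 hd0⟩, rfl⟩
  have hK' : v (t / d) ∈ ValueGroupSet v K' := by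
    refine ⟨c / a, ⟨div_mem hc ha, div_ne_zero hc0 ha0⟩, ?_⟩
    rw [map_div₀, map_div₀, div_eq_div_iff (v.ne_zero_iff.2 ha0) (v.ne_zero_iff.2 hd0),
      ← map_mul, ← map_mul, mul_comm t, h]
  obtain ⟨e, ⟨heK, he0⟩, hve⟩ : v (t / d) ∈ ValueGroupSet v K := hΓ ▸ ⟨hL, hK'⟩
  exact ⟨e, heK, he0, by rw [map_mul, hve, map_div₀, div_mul_cancel₀ _ (v.ne_zero_iff.2 hd0)]⟩

theorem ValIndep.val_le_sum_of_val_eq (hKK' : K ≤ K') (hKL : K ≤ L)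
    (hΓ : ValueGroupSet v L ∩ ValueGroupSet v K' = ValueGroupSet v K)
    (hres : ResidueLinDisjoint v K K' L) {s : ℕ} {b c : Fin s → F} (hbL : ∀ k, b k ∈ L)
    (hc : ∀ k, c k ∈ K') (hb : ValIndep v K b) {k₀ : Fin s} (hk₀ : c k₀ * b k₀ ≠ 0)
    (hM : ∀ k, v (c k * b k) = v (c k₀ * b k₀)) :
    v (c k₀ * b k₀) ≤ v (∑ k, c k * b k) := by
  have hb₀ : b k₀ ≠ 0 := right_ne_zero_of_mul hk₀
  have hcb : ∀ k, c k * b k ≠ 0 := fun k => by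
    rw [← v.ne_zero_iff, hM, v.ne_zero_iff]; exact hk₀
  choose e heK he0 hve using fun k =>
    exists_mem_val_mul_eq hΓ (hc k) (hc k₀) (hbL k) (hbL k₀) (hcb k) hk₀ (hM k)
  have hu : ∀ k, v ((b k₀)⁻¹ * ((e k)⁻¹ * b k)) = 1 := fun k => by
    rw [← mul_assoc, ← mul_inv, map_mul, map_inv₀, mul_comm (b k₀), hve k,
      inv_mul_cancel₀ (v.ne_zero_iff.2 (right_ne_zero_of_mul (hcb k)))]
  let u : Fin s → v.valuationSubring := fun k =>
    ⟨(b k₀)⁻¹ * ((e k)⁻¹ * b k), (v.mem_valuationSubring_iff _).2 (hu k).le⟩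
  have huL : ∀ k, (u k : F) ∈ L := fun k =>
    mul_mem (inv_mem (hbL k₀)) (mul_mem (inv_mem (hKL (heK k))) (hbL k))
  have hind : ValIndep v K' fun k => (u k : F) :=
    (hb.mul_left _ fun k => inv_mem (heK k)).of_residueLinDisjoint_of_val_eq_one hres hu huL
  have hcu : ∀ k, c k * e k * u k = (b k₀)⁻¹ * (c k * b k) := fun k => by
    simp only [u]; field_simp [he0 k]
  have key := valIndep_iff.1 hind (fun k => c k * e k)
    (fun k => mul_mem (hc k) (hKK' (heK k))) k₀
  rw [hcu, Finset.sum_congr rfl fun k _ => hcu k, ← Finset.mul_sum, map_mul,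
    map_mul v _ (∑ k, c k * b k)] at key
  exact (mul_le_mul_iff_right₀ (zero_lt_iff.2 (v.ne_zero_iff.2 (inv_ne_zero hb₀)))).1 key

theorem ValIndep.of_residueLinDisjoint (hKK' : K ≤ K') (hKL : K ≤ L)
    (hΓ : ValueGroupSet v L ∩ ValueGroupSet v K' = ValueGroupSet v K)
    (hres : ResidueLinDisjoint v K K' L) {n : ℕ} {b : Fin n → F} (hbL : ∀ k, b k ∈ L)
    (hb : ValIndep v K b) : ValIndep v K' b := by
  rw [valIndep_iff]
  intro c hc i
  have : Nonempty (Fin n) := ⟨i⟩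
  obtain ⟨i₀, hi₀⟩ := Finite.exists_max fun j => v (c j * b j)
  refine (hi₀ i).trans ?_
  set M := v (c i₀ * b i₀)
  rcases eq_or_ne M 0 with hM0 | hM0
  · rw [hM0]; exact zero_le
  let S := Finset.univ.filter fun j => v (c j * b j) = M
  let σ := S.orderEmbOfFin rfl
  have hσS : ∀ j, j ∈ S ↔ j ∈ Set.range σ := fun j => by
    rw [Finset.range_orderEmbOfFin, Finset.mem_coe]
  obtain ⟨k₀, hk₀⟩ := (hσS i₀).1 (Finset.mem_filter.2 ⟨Finset.mem_univ _, rfl⟩)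
  have hsumS : ∑ j ∈ S, c j * b j = ∑ k, c (σ k) * b (σ k) := by
    conv_lhs => rw [← S.map_orderEmbOfFin_univ rfl, Finset.sum_map]
    rfl
  have hS : M ≤ v (∑ j ∈ S, c j * b j) := by
    have hk₀0 : c (σ k₀) * b (σ k₀) ≠ 0 := by rw [hk₀]; exact v.ne_zero_iff.1 hM0
    have hMσ : ∀ k, v (c (σ k) * b (σ k)) = v (c (σ k₀) * b (σ k₀)) := fun k => by
      rw [hk₀]; exact (Finset.mem_filter.1 ((hσS _).2 ⟨k, rfl⟩)).2
    have := ValIndep.val_le_sum_of_val_eq hKK' hKL hΓ hres (b := b ∘ σ) (c := c ∘ σ)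
      (fun k => hbL _) (fun k => hc _) (hb.comp_injective (zero_mem K) σ.injective) hk₀0 hMσ
    rwa [hsumS, show M = v (c (σ k₀) * b (σ k₀)) by rw [hk₀]]
  have hrest : v (∑ j ∈ Finset.univ.filter fun j => v (c j * b j) ≠ M, c j * b j) < M :=
    v.map_sum_lt hM0 fun j hj => (hi₀ j).lt_of_ne (Finset.mem_filter.1 hj).2
  rw [← Finset.sum_filter_add_sum_filter_not Finset.univ fun j => v (c j * b j) = M,
    v.map_add_eq_of_lt_left (hrest.trans_le hS)]
  exact hS

end Disjoint

section Compositum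

variable {v : Valuation F Γ₀} {K K' L : Subfield F}

theorem residue_mem_closure_of_eq_div (hKK' : K ≤ K') (hKL : K ≤ L)
    (hΓ : ValueGroupSet v L ∩ ValueGroupSet v K' = ValueGroupSet v K)
    {a c t d : F} (ha : a ∈ K') (hc : c ∈ K') (ht : t ∈ L) (hd : d ∈ L) (hcd : c * d ≠ 0)
    {y : v.valuationSubring} (hy : (y : F) = a * t / (c * d)) :
    IsLocalRing.residue _ y ∈ Subfield.closure (ResidueSet v L ∪ ResidueSet v K') := by
  rcases y.2.lt_or_eq with hlt | h1
  · rw [(residue_eq_zero_iff v y).2 hlt]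
    exact zero_mem _
  have hat : a * t ≠ 0 := fun h => by simp [hy, h] at h1
  have hv : v (a * t) = v (c * d) := by
    rwa [hy, map_div₀, div_eq_one_iff_eq (v.ne_zero_iff.2 hcd)] at h1
  obtain ⟨e, heK, he0, hve⟩ := exists_mem_val_mul_eq hΓ ha hc ht hd hat hcd hv
  have hu : v (t / (e * d)) = 1 := by
    rw [map_div₀, hve, div_self (v.ne_zero_iff.2 (right_ne_zero_of_mul hat))]
  have hfac : a * e / c * (t / (e * d)) = y := by
    rw [hy]; field_simp
  have hw : v (a * e / c) = 1 := by
    simpa only [map_mul, hu, mul_one, h1] using congrArg v hfac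
  let u : v.valuationSubring := ⟨t / (e * d), (v.mem_valuationSubring_iff _).2 hu.le⟩
  let w : v.valuationSubring := ⟨a * e / c, (v.mem_valuationSubring_iff _).2 hw.le⟩
  rw [show y = w * u from Subtype.ext hfac.symm, map_mul]
  refine mul_mem (Subfield.subset_closure (Or.inr ⟨w, ?_, rfl⟩))
    (Subfield.subset_closure (Or.inl ⟨u, ?_, rfl⟩))
  · exact div_mem (mul_mem ha (hKK' heK)) hc
  · exact div_mem ht (mul_mem (hKL heK) hd)

theorem residue_mem_closure_of_eq_sum_div (hKK' : K ≤ K') (hKL : K ≤ L)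
    (hΓ : ValueGroupSet v L ∩ ValueGroupSet v K' = ValueGroupSet v K)
    {p : ℕ} {A b : Fin p → F} (hA : ∀ k, A k ∈ K') (hbL : ∀ k, b k ∈ L) {c d : F}
    (hc : c ∈ K') (hd : d ∈ L) (hcd : c * d ≠ 0) (hle : ∀ k, v (A k * b k) ≤ v (c * d))
    {y : v.valuationSubring} (hy : (y : F) = (∑ k, A k * b k) / (c * d)) :
    IsLocalRing.residue _ y ∈ Subfield.closure (ResidueSet v L ∪ ResidueSet v K') := by
  let term : Fin p → v.valuationSubring := fun k =>
    ⟨A k * b k / (c * d), (v.mem_valuationSubring_iff _).2 (by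
      rw [map_div₀]; exact div_le_one_of_le₀ (hle k) zero_le)⟩
  rw [show y = ∑ k, term k from Subtype.ext (by simp [term, hy, Finset.sum_div]), map_sum]
  exact sum_mem fun k _ =>
    residue_mem_closure_of_eq_div hKK' hKL hΓ (hA k) hc (hbL k) hd hcd rfl

theorem residue_mem_closure_of_mul_sum_eq (hKK' : K ≤ K') (hKL : K ≤ L)
    (hΓ : ValueGroupSet v L ∩ ValueGroupSet v K' = ValueGroupSet v K)
    {p : ℕ} {A C b : Fin p → F} (hA : ∀ k, A k ∈ K') (hC : ∀ k, C k ∈ K')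
    (hbL : ∀ k, b k ∈ L) (hb : ValIndep v K' b) (hg : ∑ k, C k * b k ≠ 0)
    {x : v.valuationSubring} (hx : (x : F) * ∑ k, C k * b k = ∑ k, A k * b k) :
    IsLocalRing.residue _ x ∈ Subfield.closure (ResidueSet v L ∪ ResidueSet v K') := by
  have : Nonempty (Fin p) := by
    by_contra h
    simp [not_nonempty_iff.1 h] at hg
  obtain ⟨k₀, hk₀⟩ := Finite.exists_max fun k => v (C k * b k)
  have hvg : v (∑ k, C k * b k) = v (C k₀ * b k₀) :=
    (v.map_sum_le fun k _ => hk₀ k).antisymm (valIndep_iff.1 hb C hC k₀)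
  have hcd : C k₀ * b k₀ ≠ 0 := by
    rw [← v.ne_zero_iff, ← hvg, v.ne_zero_iff]; exact hg
  have hvf : v (∑ k, A k * b k) ≤ v (C k₀ * b k₀) := by
    rw [← hx, map_mul, hvg]; exact mul_le_of_le_one_left' x.2
  have hD : v ((∑ k, C k * b k) / (C k₀ * b k₀)) = 1 := by
    rw [map_div₀, hvg, div_self (v.ne_zero_iff.2 hcd)]
  let D : v.valuationSubring := ⟨_, (v.mem_valuationSubring_iff _).2 hD.le⟩
  let N : v.valuationSubring := ⟨(∑ k, A k * b k) / (C k₀ * b k₀),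
    (v.mem_valuationSubring_iff _).2 (by
      rw [map_div₀]; exact div_le_one_of_le₀ hvf zero_le)⟩
  have hD0 : IsLocalRing.residue _ D ≠ 0 := (residue_ne_zero_iff v D).2 hD
  have hxDN : x * D = N :=
    Subtype.ext (by simp only [D, N, MulMemClass.coe_mul]; rw [← hx]; ring)
  rw [eq_div_of_mul_eq hD0 (show IsLocalRing.residue _ x * IsLocalRing.residue _ D =
    IsLocalRing.residue _ N by rw [← map_mul, hxDN])]
  exact div_mem
    (residue_mem_closure_of_eq_sum_div hKK' hKL hΓ hA hbL (hC k₀) (hbL k₀) hcd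
      (fun k => (valIndep_iff.1 hb A hA k).trans hvf) rfl)
    (residue_mem_closure_of_eq_sum_div hKK' hKL hΓ hC hbL (hC k₀) (hbL k₀) hcd hk₀ rfl)

end Compositum

/-- Under the hypotheses of valuative disjointness, the residue field of the
compositum `LK'` is the field compositum of the residue fields: `k(LK')` is the subfield of
`k_F` generated by `k(L) ∪ k(K')`. -/
theorem residueField_of_compositum
    (F Γ₀ : Type*) [Field F] [LinearOrderedCommGroupWithZero Γ₀]
    (v : Valuation F Γ₀)
    (K K' L : Subfield F) (hKK' : K ≤ K') (hKL : K ≤ L)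
    (hdef : VsDefectless v (K : Set F) (L : Set F))
    (hΓ : ValueGroupSet v (L : Set F) ∩ ValueGroupSet v (K' : Set F)
        = ValueGroupSet v (K : Set F))
    (hres : ∀ (n : ℕ) (x : Fin n → ResField v),
        (∀ i, x i ∈ ResidueSet v (L : Set F)) →
        LinIndepOver (ResidueSet v (K : Set F)) x →
        LinIndepOver (ResidueSet v (K' : Set F)) x) :
    ResidueSet v ((L ⊔ K' : Subfield F) : Set F)
      = (Subfield.closure (ResidueSet v (L : Set F) ∪ ResidueSet v (K' : Set F)) :
          Subfield (ResField v)) := by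
  refine Set.Subset.antisymm ?_ ((Subfield.closure_le (t := residueSubfield v (L ⊔ K'))).2
    (Set.union_subset (residueSet_mono (SetLike.coe_subset_coe.2 le_sup_left))
      (residueSet_mono (SetLike.coe_subset_coe.2 le_sup_right))))
  rintro _ ⟨x, hx, rfl⟩
  obtain ⟨f, hf, g, hg, hg0, hxg⟩ := exists_mul_eq_of_mem_sup hx
  obtain ⟨p, b, hbL, hb, hfb, hgb⟩ := hdef.exists_valIndep_of_mem_span hKK' hKL hf hg
  obtain ⟨A, rfl⟩ := (Submodule.mem_span_range_iff_exists_fun K').1 hfb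
  obtain ⟨C, rfl⟩ := (Submodule.mem_span_range_iff_exists_fun K').1 hgb
  simp only [Subfield.smul_def, smul_eq_mul] at hg0 hxg
  exact residue_mem_closure_of_mul_sum_eq hKK' hKL hΓ (fun k => (A k).2) (fun k => (C k).2) hbL
    (hb.of_residueLinDisjoint hKK' hKL hΓ hres hbL) hg0 hxg
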